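/- For every u ∈ S^{d−1}, every k ∈ {1,…,d}, and every t ∈ ℝ, the characteristic function of S_{u,k} := √d · [T(u)]_k satisfies |E[e^{i t S_{u,k}}] − e^{−t²/2}| ≤ t⁴/(2d). -/

import Mathlib

open MeasureTheory ProbabilityTheory Finset
open scoped ENNReal NNReal

/-- Sylvester/Walsh–Hadamard matrix of order `d` (intended for `d = 2^m`):
`H i j = (-1)^{popcount(i AND j)}`; for `d = 2^m` this satisfies the recursion
`H_{2n} = [[H_n, H_n], [H_n, -H_n]]` with `H₁ = (1)`. -/
def Had (d : ℕ) : Matrix (Fin d) (Fin d) ℝ :=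
  Matrix.of fun i j => (-1 : ℝ) ^ ((Nat.digits 2 (Nat.land i.1 j.1)).sum)

/-- A Boolean encoded as a Rademacher sign. -/
def rsign (b : Bool) : ℝ := if b then 1 else -1

/-- Canonical probability space carrying the two independent layers of i.i.d. Rademacher
signs: the uniform measure on pairs of sign patterns. -/
noncomputable def μsigns (d : ℕ) : Measure ((Fin d → Bool) × (Fin d → Bool)) :=
  (PMF.uniformOfFintype _).toMeasure

/-- `k`-th coordinate of the two-block structured rotation `T(u) = (1/d) H D⁽¹⁾ H D⁽²⁾ u`. -/
noncomputable def Tcoord (d : ℕ) (u : Fin d → ℝ)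
    (ω : (Fin d → Bool) × (Fin d → Bool)) (k : Fin d) : ℝ :=
  (1 / (d : ℝ)) * ∑ j, Had d k j * rsign (ω.1 j) * ∑ ℓ, Had d j ℓ * rsign (ω.2 ℓ) * u ℓ

/-- The structured rotation as a random vector. -/
noncomputable def Tvec (d : ℕ) (u : Fin d → ℝ)
    (ω : (Fin d → Bool) × (Fin d → Bool)) : Fin d → ℝ :=
  fun k => Tcoord d u ω k

/-- Standard Gaussian measure on ℝ^d. -/
noncomputable def stdGaussian (d : ℕ) : Measure (Fin d → ℝ) :=
  Measure.pi fun _ => gaussianReal 0 1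

/-- The uniform (rotation invariant) probability measure on the unit sphere `S^{d-1}`,
realized as the law of a normalized standard Gaussian vector. -/
noncomputable def sphereUniform (d : ℕ) : Measure (Fin d → ℝ) :=
  (stdGaussian d).map fun x i => x i / Real.sqrt (∑ j, x j ^ 2)

/-- Kolmogorov distance between the laws of two real random variables. -/
noncomputable def kolg {Ω₁ Ω₂ : Type*} [MeasurableSpace Ω₁] [MeasurableSpace Ω₂]
    (μ₁ : Measure Ω₁) (μ₂ : Measure Ω₂) (A : Ω₁ → ℝ) (B : Ω₂ → ℝ) : ℝ :=
  ⨆ t : ℝ, |(μ₁ {ω | A ω ≤ t}).toReal - (μ₂ {ω | B ω ≤ t}).toReal|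

/-- `f : ℝ^d → ℝ` is 1-Lipschitz with respect to the Euclidean norm. -/
def EucLip (d : ℕ) (f : (Fin d → ℝ) → ℝ) : Prop :=
  ∀ x y : Fin d → ℝ, |f x - f y| ≤ Real.sqrt (∑ i, (x i - y i) ^ 2)

/-- Wasserstein-1 distance (Kantorovich–Rubinstein dual form) between two laws on ℝ^d,
with respect to the Euclidean norm. -/
noncomputable def W1 (d : ℕ) (μ ν : Measure (Fin d → ℝ)) : ℝ :=
  ⨆ f : {f : (Fin d → ℝ) → ℝ // EucLip d f}, |(∫ x, f.1 x ∂μ) - ∫ x, f.1 x ∂ν|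

/-- The law of a Rademacher random variable. -/
noncomputable def radLaw : Measure ℝ :=
  (2⁻¹ : ℝ≥0∞) • Measure.dirac 1 + (2⁻¹ : ℝ≥0∞) • Measure.dirac (-1)

noncomputable def md (d : ℕ) : ℝ :=
  Real.sqrt (2 / Real.pi) * Real.sqrt ((d : ℝ) / ((d : ℝ) - 1))

/-- `sup_{u ∈ S^{d-1}} W₁(T(u), X(u))` where `X(u)` is uniform on the sphere. -/
noncomputable def supW1T (d : ℕ) : ℝ :=
  ⨆ u : {u : Fin d → ℝ // ∑ ℓ, u ℓ ^ 2 = 1},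
    W1 d ((μsigns d).map (Tvec d u.1)) (sphereUniform d)

/-- First standard basis vector. -/
def e1 (d : ℕ) : Fin d → ℝ := fun i => if i.1 = 0 then 1 else 0

/-- Sign of a real number with the (arbitrary) convention `sgn 0 = 1`. -/
noncomputable def sgn (r : ℝ) : ℝ := if 0 ≤ r then 1 else -1


-- ==================== auxiliary lemmas ====================

noncomputable def Fpar (n : ℕ) : ℝ := (-1 : ℝ) ^ ((Nat.digits 2 n).sum)

lemma Fpar_zero : Fpar 0 = 1 := by simp [Fpar]

lemma Fpar_one : Fpar 1 = -1 := by simp [Fpar]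

lemma Fpar_rec (n : ℕ) : Fpar n = (-1 : ℝ) ^ (n % 2) * Fpar (n / 2) := by
  rcases Nat.eq_zero_or_pos n with h | h
  · simp [h, Fpar]
  · rw [Fpar, Fpar, Nat.digits_def' (by norm_num) h]
    simp [pow_add]

lemma Fpar_sq (n : ℕ) : Fpar n * Fpar n = 1 := by
  rw [Fpar, ← pow_add, ← two_mul]
  exact Even.neg_one_pow ⟨_, (two_mul _)⟩

lemma Fpar_abs (n : ℕ) : |Fpar n| = 1 := by
  rw [Fpar, abs_pow]; simp

lemma xor_div_two (a b : ℕ) : (a ^^^ b) / 2 = (a / 2) ^^^ (b / 2) := by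
  apply Nat.eq_of_testBit_eq
  intro i
  simp [Nat.testBit_div_two, Nat.testBit_xor]

lemma xor_mod_two (a b : ℕ) :
    (-1 : ℝ) ^ ((a ^^^ b) % 2) = (-1 : ℝ) ^ (a % 2) * (-1 : ℝ) ^ (b % 2) := by
  have h := Nat.testBit_xor a b 0
  simp only [Nat.testBit_zero] at h
  rcases Nat.mod_two_eq_zero_or_one a with ha | ha <;>
    rcases Nat.mod_two_eq_zero_or_one b with hb | hb <;>
    rcases Nat.mod_two_eq_zero_or_one (a ^^^ b) with hc | hc <;>
    simp [ha, hb, hc] at h ⊢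

lemma Fpar_xor (a : ℕ) : ∀ b, Fpar (a ^^^ b) = Fpar a * Fpar b := by
  induction a using Nat.strong_induction_on with
  | _ a ih =>
    intro b
    rcases Nat.eq_zero_or_pos a with h | h
    · simp [h, Fpar_zero]
    · rw [Fpar_rec (a ^^^ b), xor_div_two, ih (a / 2) (Nat.div_lt_self h one_lt_two),
        xor_mod_two, Fpar_rec a, Fpar_rec b]
      ring

lemma Fpar_add_pow : ∀ (m x b : ℕ), x < 2 ^ m → Fpar (x + 2 ^ m * b) = Fpar x * Fpar b := by
  intro m
  induction m with
  | zero =>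
    intro x b hx
    interval_cases x
    simp [Fpar_zero]
  | succ m ih =>
    intro x b hx
    rcases Nat.eq_zero_or_pos b with hb | hb
    · simp [hb, Fpar_zero]
    · have hpos : 0 < x + 2 ^ (m + 1) * b := by positivity
      have h2 : 2 ^ (m + 1) * b = 2 * (2 ^ m * b) := by ring
      rw [Fpar_rec (x + 2 ^ (m + 1) * b)]
      have hmod : (x + 2 ^ (m + 1) * b) % 2 = x % 2 := by
        rw [h2]; omega
      have hdiv : (x + 2 ^ (m + 1) * b) / 2 = x / 2 + 2 ^ m * b := by
        rw [h2]; omega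
      rw [hmod, hdiv, ih (x / 2) b (by omega), Fpar_rec x]
      ring

lemma land_low {m j c : ℕ} (hj : j < 2 ^ m) : j &&& c = j &&& (c % 2 ^ m) := by
  apply Nat.eq_of_testBit_eq
  intro i
  simp only [Nat.testBit_and, Nat.testBit_mod_two_pow]
  by_cases h : i < m
  · simp [h]
  · have : j.testBit i = false := Nat.testBit_lt_two_pow
      (lt_of_lt_of_le hj (Nat.pow_le_pow_right (by norm_num) (by omega)))
    simp [this]

lemma land_high {m j c : ℕ} (hj : j < 2 ^ m) :
    (2 ^ m + j) &&& c = (j &&& (c % 2 ^ m)) + 2 ^ m * (c.testBit m).toNat := by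
  apply Nat.eq_of_testBit_eq
  intro i
  have hlow : j &&& (c % 2 ^ m) < 2 ^ m := lt_of_le_of_lt Nat.and_le_left hj
  rcases lt_trichotomy i m with h | h | h
  · rw [Nat.testBit_and, Nat.testBit_two_pow_add_gt h]
    rcases hb : c.testBit m
    · simp only [hb, Bool.toNat_false, Nat.mul_zero, Nat.add_zero, Nat.testBit_and,
        Nat.testBit_mod_two_pow]
      simp [h]
    · simp only [hb, Bool.toNat_true, Nat.mul_one, Nat.testBit_and]
      rw [Nat.add_comm, Nat.testBit_two_pow_add_gt h, Nat.testBit_and, Nat.testBit_mod_two_pow]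
      simp [h]
  · subst h
    rw [Nat.testBit_and, Nat.testBit_two_pow_add_eq,
      Nat.testBit_lt_two_pow hj]
    rcases hb : c.testBit i
    · simp only [hb, Bool.toNat_false, Nat.mul_zero, Nat.add_zero]
      simp [Nat.testBit_lt_two_pow hlow]
    · simp only [hb, Bool.toNat_true, Nat.mul_one]
      rw [Nat.add_comm, Nat.testBit_two_pow_add_eq, Nat.testBit_lt_two_pow hlow]
      simp
  · have h1 : (2 ^ m + j) &&& c < 2 ^ i := by
      have : 2 ^ m + j < 2 ^ i := by
        have : 2 ^ (m + 1) ≤ 2 ^ i := Nat.pow_le_pow_right (by norm_num) (by omega)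
        have := hj; omega
      exact lt_of_le_of_lt Nat.and_le_left this
    have h2 : (j &&& (c % 2 ^ m)) + 2 ^ m * (c.testBit m).toNat < 2 ^ i := by
      have : 2 ^ (m + 1) ≤ 2 ^ i := Nat.pow_le_pow_right (by norm_num) (by omega)
      rcases c.testBit m <;> simp at * <;> omega
    rw [Nat.testBit_lt_two_pow h1, Nat.testBit_lt_two_pow h2]

set_option linter.unnecessarySeqFocus false in
set_option linter.unusedTactic false in
lemma key_sum : ∀ (m c : ℕ), c < 2 ^ m →
    ∑ j ∈ Finset.range (2 ^ m), Fpar (j &&& c) = if c = 0 then (2 ^ m : ℝ) else 0 := by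
  intro m
  induction m with
  | zero =>
    intro c hc
    interval_cases c
    simp [Fpar_zero]
  | succ m ih =>
    intro c hc
    have hsplit : (2 : ℕ) ^ (m + 1) = 2 ^ m + 2 ^ m := by ring
    rw [hsplit, Finset.sum_range_add]
    have h1 : ∀ j ∈ Finset.range (2 ^ m), Fpar (j &&& c) = Fpar (j &&& (c % 2 ^ m)) := by
      intro j hj
      rw [land_low (Finset.mem_range.mp hj)]
    have h2 : ∀ j ∈ Finset.range (2 ^ m), Fpar ((2 ^ m + j) &&& c)
        = Fpar (j &&& (c % 2 ^ m)) * Fpar (c.testBit m).toNat := by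
      intro j hj
      rw [land_high (Finset.mem_range.mp hj),
        Fpar_add_pow m _ _ (lt_of_le_of_lt Nat.and_le_left (Finset.mem_range.mp hj))]
    rw [Finset.sum_congr rfl h1, Finset.sum_congr rfl h2, ← Finset.sum_mul,
      ih (c % 2 ^ m) (Nat.mod_lt _ (by positivity))]
    rcases hb : c.testBit m
    · have hcm : c < 2 ^ m := by
        rcases Nat.lt_or_ge c (2 ^ m) with h | h
        · exact h
        · exfalso
          have : c.testBit m = true := by
            have h1 : c / 2 ^ m = 1 := by
              apply Nat.div_eq_of_lt_le (by omega)
              have : c < 2 ^ m + 2 ^ m := by rw [hsplit] at hc; omega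
              omega
            simp [Nat.testBit_eq_decide_div_mod_eq, h1]
          rw [this] at hb; exact Bool.noConfusion hb
      rw [Nat.mod_eq_of_lt hcm]
      simp only [hb, Bool.toNat_false, Fpar_zero, mul_one]
      rcases eq_or_ne c 0 with h | h <;> simp [h] <;> push_cast <;> ring
    · have hc0 : c ≠ 0 := by
        intro h; rw [h] at hb; simp at hb
      simp [hb, Fpar_one, hc0]

lemma Had_eq_Fpar (d : ℕ) (i j : Fin d) : Had d i j = Fpar (i.1 &&& j.1) := rfl

lemma Had_mul_self (d : ℕ) (i j : Fin d) : Had d i j * Had d i j = 1 := by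
  rw [Had_eq_Fpar]; exact Fpar_sq _

lemma Had_sq (d : ℕ) (i j : Fin d) : Had d i j ^ 2 = 1 := by
  rw [sq]; exact Had_mul_self d i j

lemma Had_abs (d : ℕ) (i j : Fin d) : |Had d i j| = 1 := by
  rw [Had_eq_Fpar]; exact Fpar_abs _

lemma Had_ortho {m d : ℕ} (hd : d = 2 ^ m) (l l' : Fin d) :
    ∑ j : Fin d, Had d j l * Had d j l' = if l = l' then (d : ℝ) else 0 := by
  have h1 : ∀ j : Fin d, Had d j l * Had d j l' = Fpar (j.1 &&& (l.1 ^^^ l'.1)) := by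
    intro j
    rw [Had_eq_Fpar, Had_eq_Fpar, ← Fpar_xor, Nat.and_xor_distrib_left]
  subst hd
  simp only [h1]
  rw [Fin.sum_univ_eq_sum_range (fun n => Fpar (n &&& (l.1 ^^^ l'.1)))]
  have hc : l.1 ^^^ l'.1 < 2 ^ m := Nat.xor_lt_two_pow l.2 l'.2
  rw [key_sum m _ hc]
  have : l.1 ^^^ l'.1 = 0 ↔ l = l' := by
    rw [xor_eq_zero_iff]
    exact ⟨fun h => Fin.ext h, fun h => by rw [h]⟩
  rcases eq_or_ne l l' with h | h
  · simp [h, this.mpr h]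
  · simp [h, (not_iff_not.mpr this).mpr h]

-- ===== rsign lemmas =====

lemma rsign_sq (b : Bool) : rsign b ^ 2 = 1 := by cases b <;> simp [rsign]

lemma rsign_not (b : Bool) : rsign (!b) = -rsign b := by cases b <;> simp [rsign]

-- ===== moment lemmas =====

section moments
variable {d : ℕ}

def flipAt (a : Fin d) (δ : Fin d → Bool) : Fin d → Bool := Function.update δ a (!δ a)

lemma flipAt_invol (a : Fin d) : Function.Involutive (flipAt a) := by
  intro δ
  funext i
  by_cases h : i = a <;> simp [flipAt, Function.update, h]

lemma sum_flip (a : Fin d) (g : (Fin d → Bool) → ℝ) :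
    ∑ δ : Fin d → Bool, g δ = ∑ δ : Fin d → Bool, g (flipAt a δ) :=
  (Equiv.sum_comp ((flipAt_invol a).toPerm _) g).symm

lemma card_bool_fun : (Fintype.card (Fin d → Bool) : ℝ) = 2 ^ d := by
  simp [Fintype.card_fun]

lemma moment2 (c : Fin d → ℝ) (s : Finset (Fin d)) :
    ∑ δ : Fin d → Bool, (∑ ℓ ∈ s, rsign (δ ℓ) * c ℓ) ^ 2
      = 2 ^ d * ∑ ℓ ∈ s, c ℓ ^ 2 := by
  classical
  induction s using Finset.induction_on with
  | empty => simp
  | @insert a s ha ih =>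
    have key : ∀ δ : Fin d → Bool,
        (∑ ℓ ∈ insert a s, rsign (δ ℓ) * c ℓ) ^ 2
          + (∑ ℓ ∈ insert a s, rsign (flipAt a δ ℓ) * c ℓ) ^ 2
        = 2 * (∑ ℓ ∈ s, rsign (δ ℓ) * c ℓ) ^ 2 + 2 * c a ^ 2 := by
      intro δ
      have hX : ∀ ℓ ∈ s, rsign (flipAt a δ ℓ) * c ℓ = rsign (δ ℓ) * c ℓ := by
        intro ℓ hℓ
        have : ℓ ≠ a := fun h => ha (h ▸ hℓ)
        simp [flipAt, Function.update, this]
      rw [Finset.sum_insert ha, Finset.sum_insert ha, Finset.sum_congr rfl hX]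
      have hfa : rsign (flipAt a δ a) = -rsign (δ a) := by
        simp [flipAt, rsign_not]
      rw [hfa]
      have h1 : rsign (δ a) ^ 2 = 1 := rsign_sq _
      nlinarith [h1]
    have h2 : 2 * ∑ δ : Fin d → Bool, (∑ ℓ ∈ insert a s, rsign (δ ℓ) * c ℓ) ^ 2
        = ∑ δ : Fin d → Bool, ((∑ ℓ ∈ insert a s, rsign (δ ℓ) * c ℓ) ^ 2
            + (∑ ℓ ∈ insert a s, rsign (flipAt a δ ℓ) * c ℓ) ^ 2) := by
      rw [Finset.sum_add_distrib, two_mul]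
      congr 1
      exact sum_flip a _
    rw [Finset.sum_congr rfl (fun δ _ => key δ)] at h2
    rw [Finset.sum_add_distrib, ← Finset.mul_sum, ih] at h2
    simp only [Finset.sum_const, Finset.card_univ, nsmul_eq_mul] at h2
    rw [Finset.sum_insert ha]
    have hcard : ((Fintype.card (Fin d → Bool) : ℝ)) = 2 ^ d := card_bool_fun
    rw [hcard] at h2
    linarith

lemma moment4 (c : Fin d → ℝ) (s : Finset (Fin d)) :
    ∑ δ : Fin d → Bool, (∑ ℓ ∈ s, rsign (δ ℓ) * c ℓ) ^ 4
      ≤ 3 * 2 ^ d * (∑ ℓ ∈ s, c ℓ ^ 2) ^ 2 := by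
  classical
  induction s using Finset.induction_on with
  | empty => simp
  | @insert a s ha ih =>
    have key : ∀ δ : Fin d → Bool,
        (∑ ℓ ∈ insert a s, rsign (δ ℓ) * c ℓ) ^ 4
          + (∑ ℓ ∈ insert a s, rsign (flipAt a δ ℓ) * c ℓ) ^ 4
        = 2 * (∑ ℓ ∈ s, rsign (δ ℓ) * c ℓ) ^ 4
          + 12 * (∑ ℓ ∈ s, rsign (δ ℓ) * c ℓ) ^ 2 * c a ^ 2 + 2 * c a ^ 4 := by
      intro δ
      have hX : ∀ ℓ ∈ s, rsign (flipAt a δ ℓ) * c ℓ = rsign (δ ℓ) * c ℓ := by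
        intro ℓ hℓ
        have : ℓ ≠ a := fun h => ha (h ▸ hℓ)
        simp [flipAt, Function.update, this]
      rw [Finset.sum_insert ha, Finset.sum_insert ha, Finset.sum_congr rfl hX]
      have hfa : rsign (flipAt a δ a) = -rsign (δ a) := by
        simp [flipAt, rsign_not]
      rw [hfa]
      have h1 : rsign (δ a) ^ 2 = 1 := rsign_sq _
      linear_combination (12 * (∑ ℓ ∈ s, rsign (δ ℓ) * c ℓ) ^ 2 * c a ^ 2
        + 2 * c a ^ 4 * (rsign (δ a) ^ 2 + 1)) * h1
    have h2 : 2 * ∑ δ : Fin d → Bool, (∑ ℓ ∈ insert a s, rsign (δ ℓ) * c ℓ) ^ 4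
        = ∑ δ : Fin d → Bool, ((∑ ℓ ∈ insert a s, rsign (δ ℓ) * c ℓ) ^ 4
            + (∑ ℓ ∈ insert a s, rsign (flipAt a δ ℓ) * c ℓ) ^ 4) := by
      rw [Finset.sum_add_distrib, two_mul]
      congr 1
      exact sum_flip a _
    rw [Finset.sum_congr rfl (fun δ _ => key δ)] at h2
    have hmid : ∑ δ : Fin d → Bool, 12 * (∑ ℓ ∈ s, rsign (δ ℓ) * c ℓ) ^ 2 * c a ^ 2
        = 12 * c a ^ 2 * (2 ^ d * ∑ ℓ ∈ s, c ℓ ^ 2) := by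
      rw [← moment2 c s, Finset.mul_sum]
      exact Finset.sum_congr rfl (fun δ _ => by ring)
    rw [Finset.sum_add_distrib, Finset.sum_add_distrib, hmid, ← Finset.mul_sum,
      Finset.sum_const, Finset.card_univ, nsmul_eq_mul] at h2
    have hcard : ((Fintype.card (Fin d → Bool) : ℝ)) = 2 ^ d := card_bool_fun
    rw [hcard] at h2
    rw [Finset.sum_insert ha]
    have hS : (0 : ℝ) ≤ ∑ ℓ ∈ s, c ℓ ^ 2 :=
      Finset.sum_nonneg (fun ℓ _ => sq_nonneg _)
    have hpow : (0 : ℝ) < 2 ^ d := by positivity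
    nlinarith [ih, hS, hpow, sq_nonneg (c a), sq_nonneg (c a ^ 2)]

end moments

-- ===== calculus lemmas =====

lemma sin_lower {x : ℝ} (hx : 0 ≤ x) : x - x ^ 3 / 6 ≤ Real.sin x := by
  have hmono : MonotoneOn (fun x : ℝ => Real.sin x - x + x ^ 3 / 6) (Set.Ici 0) := by
    apply monotoneOn_of_deriv_nonneg (convex_Ici 0)
    · exact Continuous.continuousOn (by continuity)
    · apply Differentiable.differentiableOn
      intro y
      exact (((Real.hasDerivAt_sin y).sub (hasDerivAt_id y)).add
        ((hasDerivAt_pow 3 y).div_const 6)).differentiableAt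
    · intro y _
      have hd : deriv (fun x : ℝ => Real.sin x - x + x ^ 3 / 6) y
          = Real.cos y - 1 + 3 * y ^ 2 / 6 := by
        have := (((Real.hasDerivAt_sin y).sub (hasDerivAt_id y)).add
          ((hasDerivAt_pow 3 y).div_const 6))
        have h := this.deriv
        simp at h
        exact h.trans (by ring)
      rw [hd]
      nlinarith [Real.one_sub_sq_div_two_le_cos (x := y)]
  have := hmono (Set.self_mem_Ici) (Set.mem_Ici.mpr hx) hx
  simp at this
  linarith

lemma cos_upper (x : ℝ) : Real.cos x ≤ 1 - x ^ 2 / 2 + x ^ 4 / 24 := by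
  wlog hx : 0 ≤ x with H
  · have := H (-x) (by linarith [le_of_not_ge hx])
    rw [Real.cos_neg] at this
    convert this using 2 <;> ring
  have hmono : MonotoneOn (fun x : ℝ => 1 - x ^ 2 / 2 + x ^ 4 / 24 - Real.cos x) (Set.Ici 0) := by
    apply monotoneOn_of_deriv_nonneg (convex_Ici 0)
    · exact Continuous.continuousOn (by continuity)
    · apply Differentiable.differentiableOn
      intro y
      exact ((((hasDerivAt_const y (1:ℝ)).sub ((hasDerivAt_pow 2 y).div_const 2)).add
        ((hasDerivAt_pow 4 y).div_const 24)).sub (Real.hasDerivAt_cos y)).differentiableAt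
    · intro y hy
      have hy0 : (0:ℝ) ≤ y := le_of_lt (by simpa using hy)
      have hd : deriv (fun x : ℝ => 1 - x ^ 2 / 2 + x ^ 4 / 24 - Real.cos x) y
          = 0 - 2 * y / 2 + 4 * y ^ 3 / 24 - (-Real.sin y) := by
        have := (((hasDerivAt_const y (1:ℝ)).sub ((hasDerivAt_pow 2 y).div_const 2)).add
          ((hasDerivAt_pow 4 y).div_const 24)).sub (Real.hasDerivAt_cos y)
        have h := this.deriv
        simp at h
        exact h.trans (by ring)
      rw [hd]
      nlinarith [sin_lower hy0]
  have := hmono (Set.self_mem_Ici) (Set.mem_Ici.mpr hx) hx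
  simp at this
  linarith

lemma exp_upper {y : ℝ} (hy : 0 ≤ y) : Real.exp (-y) ≤ 1 - y + y ^ 2 / 2 := by
  have hmono : MonotoneOn (fun y : ℝ => 1 - y + y ^ 2 / 2 - Real.exp (-y)) (Set.Ici 0) := by
    apply monotoneOn_of_deriv_nonneg (convex_Ici 0)
    · exact Continuous.continuousOn (by continuity)
    · apply Differentiable.differentiableOn
      intro z
      exact (((hasDerivAt_const z (1:ℝ)).sub (hasDerivAt_id z)).add
        ((hasDerivAt_pow 2 z).div_const 2)).sub
        (((Real.hasDerivAt_exp (-z)).comp z (hasDerivAt_neg z))) |>.differentiableAt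
    · intro z hz
      have hz0 : (0:ℝ) ≤ z := le_of_lt (by simpa using hz)
      have hd : deriv (fun y : ℝ => 1 - y + y ^ 2 / 2 - Real.exp (-y)) z
          = 0 - 1 + 2 * z / 2 - Real.exp (-z) * (-1) := by
        have := (((hasDerivAt_const z (1:ℝ)).sub (hasDerivAt_id z)).add
          ((hasDerivAt_pow 2 z).div_const 2)).sub
          (((Real.hasDerivAt_exp (-z)).comp z (hasDerivAt_neg z)))
        have h := this.deriv
        simp at h
        exact h.trans (by ring)
      rw [hd]
      have := Real.add_one_le_exp (-z)
      nlinarith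
  have := hmono (Set.self_mem_Ici) (Set.mem_Ici.mpr hy) hy
  simp at this
  linarith

lemma cos_exp_bound (x : ℝ) : |Real.cos x - Real.exp (-(x ^ 2 / 2))| ≤ x ^ 4 / 8 := by
  have h1 : 1 - x ^ 2 / 2 ≤ Real.cos x := Real.one_sub_sq_div_two_le_cos
  have h2 : Real.cos x ≤ 1 - x ^ 2 / 2 + x ^ 4 / 24 := cos_upper x
  have h3 : 1 - x ^ 2 / 2 ≤ Real.exp (-(x ^ 2 / 2)) := by
    have := Real.add_one_le_exp (-(x ^ 2 / 2)); linarith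
  have h4 : Real.exp (-(x ^ 2 / 2)) ≤ 1 - x ^ 2 / 2 + (x ^ 2 / 2) ^ 2 / 2 :=
    exp_upper (by positivity)
  rw [abs_le]
  constructor <;> nlinarith

-- ===== product difference =====

lemma prod_diff {ι : Type*} (s : Finset ι) (f g : ι → ℝ)
    (hf : ∀ i ∈ s, |f i| ≤ 1) (hg : ∀ i ∈ s, |g i| ≤ 1) :
    |∏ i ∈ s, f i - ∏ i ∈ s, g i| ≤ ∑ i ∈ s, |f i - g i| := by
  classical
  induction s using Finset.induction_on with
  | empty => simp
  | @insert a s ha ih =>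
    rw [Finset.prod_insert ha, Finset.prod_insert ha, Finset.sum_insert ha]
    have h1 : |∏ i ∈ s, g i| ≤ 1 := by
      rw [Finset.abs_prod]
      exact Finset.prod_le_one (fun i _ => abs_nonneg _)
        (fun i hi => hg i (Finset.mem_insert_of_mem hi))
    have h2 : |f a| ≤ 1 := hf a (Finset.mem_insert_self a s)
    have ihs := ih (fun i hi => hf i (Finset.mem_insert_of_mem hi))
      (fun i hi => hg i (Finset.mem_insert_of_mem hi))
    calc |f a * ∏ i ∈ s, f i - g a * ∏ i ∈ s, g i|
        = |f a * (∏ i ∈ s, f i - ∏ i ∈ s, g i) + (f a - g a) * ∏ i ∈ s, g i| := by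
          ring_nf
      _ ≤ |f a * (∏ i ∈ s, f i - ∏ i ∈ s, g i)| + |(f a - g a) * ∏ i ∈ s, g i| :=
          abs_add_le _ _
      _ ≤ |∏ i ∈ s, f i - ∏ i ∈ s, g i| + |f a - g a| := by
          rw [abs_mul, abs_mul]
          have := abs_nonneg (∏ i ∈ s, f i - ∏ i ∈ s, g i)
          have := abs_nonneg (f a - g a)
          nlinarith
      _ ≤ |f a - g a| + ∑ i ∈ s, |f i - g i| := by linarith

lemma sum_bool_exp (x : ℝ) :
    ∑ e : Bool, Complex.exp (Complex.I * ((rsign e * x : ℝ) : ℂ))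
      = 2 * Complex.cos (x : ℂ) := by
  rw [Complex.two_cos]
  simp only [Fintype.sum_bool, rsign]
  push_cast
  ring_nf


-- ===== structured rotation auxiliaries =====

noncomputable def Vj (d : ℕ) (u : Fin d → ℝ) (j : Fin d) (δ : Fin d → Bool) : ℝ :=
  ∑ ℓ, Had d j ℓ * rsign (δ ℓ) * u ℓ

noncomputable def bj (d : ℕ) (u : Fin d → ℝ) (t : ℝ) (k j : Fin d) (δ : Fin d → Bool) : ℝ :=
  t * Had d k j * Vj d u j δ / Real.sqrt d

lemma sumV_sq {m d : ℕ} (hd : d = 2 ^ m) (u : Fin d → ℝ) (hu : ∑ ℓ, u ℓ ^ 2 = 1)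
    (δ : Fin d → Bool) : ∑ j, Vj d u j δ ^ 2 = (d : ℝ) := by
  have expand : ∀ j : Fin d, Vj d u j δ ^ 2
      = ∑ ℓ, ∑ ℓ', (Had d j ℓ * Had d j ℓ')
          * ((rsign (δ ℓ) * u ℓ) * (rsign (δ ℓ') * u ℓ')) := by
    intro j
    rw [Vj, sq, Finset.sum_mul_sum]
    exact Finset.sum_congr rfl fun ℓ _ => Finset.sum_congr rfl fun ℓ' _ => by ring
  calc ∑ j, Vj d u j δ ^ 2
      = ∑ ℓ, ∑ ℓ', (∑ j, Had d j ℓ * Had d j ℓ')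
          * ((rsign (δ ℓ) * u ℓ) * (rsign (δ ℓ') * u ℓ')) := by
        rw [Finset.sum_congr rfl (fun j _ => expand j), Finset.sum_comm]
        refine Finset.sum_congr rfl fun ℓ _ => ?_
        rw [Finset.sum_comm]
        exact Finset.sum_congr rfl fun ℓ' _ => (Finset.sum_mul _ _ _).symm
    _ = ∑ ℓ, (d : ℝ) * ((rsign (δ ℓ) * u ℓ) * (rsign (δ ℓ) * u ℓ)) := by
        refine Finset.sum_congr rfl fun ℓ _ => ?_
        rw [Finset.sum_congr rfl (fun ℓ' _ => by rw [Had_ortho hd ℓ ℓ'])]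
        simp
    _ = (d : ℝ) * ∑ ℓ, u ℓ ^ 2 := by
        rw [Finset.mul_sum]
        refine Finset.sum_congr rfl fun ℓ _ => ?_
        have h := rsign_sq (δ ℓ)
        linear_combination ((d : ℝ) * u ℓ ^ 2) * h
    _ = (d : ℝ) := by rw [hu, mul_one]

lemma sumV_four {d : ℕ} (u : Fin d → ℝ) (hu : ∑ ℓ, u ℓ ^ 2 = 1) (j : Fin d) :
    ∑ δ : Fin d → Bool, Vj d u j δ ^ 4 ≤ 3 * 2 ^ d := by
  have hc : ∀ δ : Fin d → Bool, Vj d u j δ = ∑ ℓ, rsign (δ ℓ) * (Had d j ℓ * u ℓ) :=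
    fun δ => Finset.sum_congr rfl fun ℓ _ => by ring
  calc ∑ δ : Fin d → Bool, Vj d u j δ ^ 4
      = ∑ δ : Fin d → Bool, (∑ ℓ, rsign (δ ℓ) * (Had d j ℓ * u ℓ)) ^ 4 :=
        Finset.sum_congr rfl fun δ _ => by rw [hc]
    _ ≤ 3 * 2 ^ d * (∑ ℓ, (Had d j ℓ * u ℓ) ^ 2) ^ 2 := moment4 _ _
    _ = 3 * 2 ^ d := by
        have h1 : ∑ ℓ, (Had d j ℓ * u ℓ) ^ 2 = 1 := by
          rw [← hu]
          refine Finset.sum_congr rfl fun ℓ _ => ?_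
          rw [mul_pow, Had_sq, one_mul]
        rw [h1, one_pow, mul_one]

lemma sum_b_sq {m d : ℕ} (hd : d = 2 ^ m) (u : Fin d → ℝ) (hu : ∑ ℓ, u ℓ ^ 2 = 1)
    (t : ℝ) (k : Fin d) (δ : Fin d → Bool) :
    ∑ j, bj d u t k j δ ^ 2 = t ^ 2 := by
  have hd0 : (0 : ℝ) < d := by
    rw [hd]; positivity
  have hsq : Real.sqrt d * Real.sqrt d = (d : ℝ) := Real.mul_self_sqrt (le_of_lt hd0)
  have h1 : ∀ j : Fin d, bj d u t k j δ ^ 2 = t ^ 2 / d * Vj d u j δ ^ 2 := by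
    intro j
    rw [bj, div_pow, mul_pow, mul_pow, Had_sq, mul_one]
    rw [show Real.sqrt (d:ℝ) ^ 2 = (d:ℝ) by rw [sq]; exact hsq]
    ring
  rw [Finset.sum_congr rfl (fun j _ => h1 j), ← Finset.mul_sum, sumV_sq hd u hu δ]
  field_simp

lemma prod_cos_bound {m d : ℕ} (hd : d = 2 ^ m) (u : Fin d → ℝ) (hu : ∑ ℓ, u ℓ ^ 2 = 1)
    (t : ℝ) (k : Fin d) (δ : Fin d → Bool) :
    |(∏ j, Real.cos (bj d u t k j δ)) - Real.exp (-(t ^ 2 / 2))|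
      ≤ ∑ j, bj d u t k j δ ^ 4 / 8 := by
  have hexp : Real.exp (-(t ^ 2 / 2)) = ∏ j, Real.exp (-(bj d u t k j δ ^ 2 / 2)) := by
    rw [← Real.exp_sum]
    congr 1
    rw [← sum_b_sq hd u hu t k δ, Finset.sum_div, ← Finset.sum_neg_distrib]
  rw [hexp]
  calc |(∏ j, Real.cos (bj d u t k j δ)) - ∏ j, Real.exp (-(bj d u t k j δ ^ 2 / 2))|
      ≤ ∑ j, |Real.cos (bj d u t k j δ) - Real.exp (-(bj d u t k j δ ^ 2 / 2))| := by
        apply prod_diff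
        · intro j _; exact Real.abs_cos_le_one _
        · intro j _
          rw [abs_of_pos (Real.exp_pos _)]
          rw [← Real.exp_zero]
          apply Real.exp_le_exp.mpr
          have : (0:ℝ) ≤ bj d u t k j δ ^ 2 / 2 := by positivity
          linarith
    _ ≤ ∑ j, bj d u t k j δ ^ 4 / 8 := by
        refine Finset.sum_le_sum fun j _ => ?_
        exact cos_exp_bound _

lemma char_eq {m d : ℕ} (hd : d = 2 ^ m) (u : Fin d → ℝ) (t : ℝ) (k : Fin d) :
    (∫ ω, Complex.exp (Complex.I * (t * (Real.sqrt d * Tcoord d u ω k) : ℝ)) ∂μsigns d)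
      = ((((2:ℝ) ^ d)⁻¹ * ∑ δ : Fin d → Bool, ∏ j, Real.cos (bj d u t k j δ) : ℝ) : ℂ) := by
  classical
  have hd0 : (0:ℝ) < d := by rw [hd]; positivity
  have hdne : (d:ℝ) ≠ 0 := ne_of_gt hd0
  have hs0 : Real.sqrt d ≠ 0 := ne_of_gt (Real.sqrt_pos.mpr hd0)
  have hsq : Real.sqrt ↑d * Real.sqrt ↑d = (d:ℝ) := Real.mul_self_sqrt hd0.le
  have harg : ∀ ω : (Fin d → Bool) × (Fin d → Bool),
      t * (Real.sqrt d * Tcoord d u ω k) = ∑ j, rsign (ω.1 j) * bj d u t k j ω.2 := by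
    intro ω
    rw [Tcoord, Finset.mul_sum, Finset.mul_sum, Finset.mul_sum]
    refine Finset.sum_congr rfl fun j _ => ?_
    have hinv : (Real.sqrt (d:ℝ))⁻¹ = Real.sqrt (d:ℝ) / (d:ℝ) := by
      rw [inv_eq_one_div, div_eq_div_iff hs0 hdne]
      exact (one_mul _).trans hsq.symm
    have hdiv : ∀ x : ℝ, x / Real.sqrt (d:ℝ) = x * Real.sqrt (d:ℝ) / (d:ℝ) := fun x => by
      rw [div_eq_mul_inv, hinv, mul_div_assoc]
    rw [bj, hdiv, Vj]
    ring
  have hexp : ∀ ω : (Fin d → Bool) × (Fin d → Bool),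
      Complex.exp (Complex.I * (t * (Real.sqrt d * Tcoord d u ω k) : ℝ))
        = ∏ j, Complex.exp (Complex.I * ((rsign (ω.1 j) * bj d u t k j ω.2 : ℝ) : ℂ)) := by
    intro ω
    rw [harg ω, Complex.ofReal_sum, Finset.mul_sum, Complex.exp_sum]
  rw [μsigns, PMF.integral_eq_sum]
  simp only [PMF.uniformOfFintype_apply, ENNReal.toReal_inv, ENNReal.toReal_natCast]
  rw [← Finset.smul_sum]
  rw [Finset.sum_congr rfl fun ω _ => hexp ω]
  rw [Fintype.sum_prod_type, Finset.sum_comm]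
  have hinner : ∀ δ : Fin d → Bool,
      (∑ ε : Fin d → Bool, ∏ j, Complex.exp (Complex.I * ((rsign (ε j) * bj d u t k j δ : ℝ) : ℂ)))
        = (2:ℂ) ^ d * ((∏ j, Real.cos (bj d u t k j δ) : ℝ) : ℂ) := by
    intro δ
    rw [← Fintype.prod_sum (fun j e => Complex.exp (Complex.I * ((rsign e * bj d u t k j δ : ℝ) : ℂ)))]
    rw [Finset.prod_congr rfl fun j _ => sum_bool_exp (bj d u t k j δ)]
    rw [Finset.prod_mul_distrib, Finset.prod_const, Finset.card_univ, Fintype.card_fin]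
    congr 1
    rw [Complex.ofReal_prod]
    exact Finset.prod_congr rfl fun j _ => (Complex.ofReal_cos _).symm
  rw [Finset.sum_congr rfl fun δ _ => hinner δ, ← Finset.mul_sum]
  have hcard : ((Fintype.card ((Fin d → Bool) × (Fin d → Bool)) : ℝ)) = 2 ^ d * 2 ^ d := by
    simp [Fintype.card_fun]
  rw [Complex.real_smul, hcard, ← Complex.ofReal_sum]
  have h2 : ((2:ℂ) ^ d) ≠ 0 := pow_ne_zero _ two_ne_zero
  push_cast
  field_simp
-- STATEMENT 9
theorem stmt9 (m d : ℕ) (hd : d = 2 ^ m) (u : Fin d → ℝ) (hu : ∑ ℓ, u ℓ ^ 2 = 1)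
    (k : Fin d) (t : ℝ) :
    ‖((∫ ω, Complex.exp (Complex.I * (t * (Real.sqrt d * Tcoord d u ω k) : ℝ)) ∂μsigns d)
          - (Real.exp (-(t ^ 2 / 2)) : ℝ) : ℂ)‖ ≤ t ^ 4 / (2 * d) := by
  classical
  have hd0 : (0:ℝ) < d := by rw [hd]; positivity
  have hdne : (d:ℝ) ≠ 0 := ne_of_gt hd0
  have h2d : (0:ℝ) < 2 ^ d := by positivity
  set E : ℝ := Real.exp (-(t ^ 2 / 2)) with hE
  set P : (Fin d → Bool) → ℝ := fun δ => ∏ j, Real.cos (bj d u t k j δ) with hP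
  rw [char_eq hd u t k, ← Complex.ofReal_sub, Complex.norm_real, Real.norm_eq_abs]
  have hdecomp : ((2:ℝ) ^ d)⁻¹ * (∑ δ : Fin d → Bool, P δ) - E
      = ((2:ℝ) ^ d)⁻¹ * ∑ δ : Fin d → Bool, (P δ - E) := by
    rw [Finset.sum_sub_distrib, Finset.sum_const, Finset.card_univ, nsmul_eq_mul,
      card_bool_fun]
    field_simp
  rw [hdecomp]
  have hb4 : ∀ (j : Fin d) (δ : Fin d → Bool),
      bj d u t k j δ ^ 4 = t ^ 4 * Vj d u j δ ^ 4 / (d:ℝ) ^ 2 := by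
    intro j δ
    rw [bj, div_pow, mul_pow, mul_pow]
    rw [show Had d k j ^ 4 = 1 by
      rw [show (4:ℕ) = 2 * 2 from rfl, pow_mul, Had_sq, one_pow]]
    rw [show Real.sqrt (d:ℝ) ^ 4 = (d:ℝ) ^ 2 by
      rw [show (4:ℕ) = 2 * 2 from rfl, pow_mul, Real.sq_sqrt hd0.le]]
    ring
  have hsum4 : ∀ j : Fin d, ∑ δ : Fin d → Bool, bj d u t k j δ ^ 4
      ≤ 3 * 2 ^ d * t ^ 4 / (d:ℝ) ^ 2 := by
    intro j
    rw [Finset.sum_congr rfl fun δ _ => hb4 j δ]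
    have : ∑ δ : Fin d → Bool, t ^ 4 * Vj d u j δ ^ 4 / (d:ℝ) ^ 2
        = t ^ 4 / (d:ℝ) ^ 2 * ∑ δ : Fin d → Bool, Vj d u j δ ^ 4 := by
      rw [Finset.mul_sum]
      exact Finset.sum_congr rfl fun δ _ => by ring
    rw [this]
    have h4 := sumV_four u hu j
    have ht4 : (0:ℝ) ≤ t ^ 4 / (d:ℝ) ^ 2 := by positivity
    calc t ^ 4 / (d:ℝ) ^ 2 * ∑ δ : Fin d → Bool, Vj d u j δ ^ 4
        ≤ t ^ 4 / (d:ℝ) ^ 2 * (3 * 2 ^ d) := by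
          apply mul_le_mul_of_nonneg_left h4 ht4
      _ = 3 * 2 ^ d * t ^ 4 / (d:ℝ) ^ 2 := by ring
  calc |((2:ℝ) ^ d)⁻¹ * ∑ δ : Fin d → Bool, (P δ - E)|
      ≤ ((2:ℝ) ^ d)⁻¹ * ∑ δ : Fin d → Bool, |P δ - E| := by
        rw [abs_mul, abs_of_pos (by positivity : (0:ℝ) < ((2:ℝ) ^ d)⁻¹)]
        exact mul_le_mul_of_nonneg_left (Finset.abs_sum_le_sum_abs _ _) (by positivity)
    _ ≤ ((2:ℝ) ^ d)⁻¹ * ∑ δ : Fin d → Bool, ∑ j, bj d u t k j δ ^ 4 / 8 := by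
        apply mul_le_mul_of_nonneg_left _ (by positivity)
        exact Finset.sum_le_sum fun δ _ => prod_cos_bound hd u hu t k δ
    _ = ((2:ℝ) ^ d)⁻¹ * ∑ j, (∑ δ : Fin d → Bool, bj d u t k j δ ^ 4) / 8 := by
        rw [Finset.sum_comm]
        congr 1
        exact Finset.sum_congr rfl fun j _ => (Finset.sum_div _ _ _).symm
    _ ≤ ((2:ℝ) ^ d)⁻¹ * ∑ j : Fin d, (3 * 2 ^ d * t ^ 4 / (d:ℝ) ^ 2) / 8 := by
        apply mul_le_mul_of_nonneg_left _ (by positivity)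
        refine Finset.sum_le_sum fun j _ => ?_
        gcongr
        exact hsum4 j
    _ = 3 * t ^ 4 / (8 * d) := by
        rw [Finset.sum_const, Finset.card_univ, Fintype.card_fin, nsmul_eq_mul]
        field_simp
    _ ≤ t ^ 4 / (2 * d) := by
        rw [div_le_div_iff₀ (by positivity) (by positivity)]
        nlinarith [mul_nonneg (by positivity : (0:ℝ) ≤ t ^ 4) hd0.le]
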